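/- Let δ ∈ Δ satisfy properties (P1) and (P2). Define δ' ∈ ℝ^{L+1} by backward recursion: δ'(L+1) := δ(L+1); for ℓ = L, L−1, ..., 2: δ'(ℓ) := δ(ℓ) if δ(ℓ) ≥ ρ(ℓ), and δ'(ℓ) := min{ρ(ℓ), δ'(ℓ+1)} if δ(ℓ) < ρ(ℓ); and δ'(1) := δ(1). Then δ' ∈ Δ, δ' satisfies properties (P1), (P2), and (P3), and if δ' ≠ δ then δ' dominates δ. -/

import Mathlib

open Finset

/-- The maximum revenue `r̄` among the positions `1, …, L+1`. -/
noncomputable def rbar (L : ℕ) (ρ : ℕ → ℝ) : ℝ :=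
  (Finset.Icc 1 (L + 1)).sup' (Finset.nonempty_Icc.mpr (by omega)) ρ

/-- Membership in `Δ = {δ ∈ ℝ^{L+1} : 0 ≤ δ 1 ≤ ⋯ ≤ δ (L+1) ≤ r̄}`. -/
def memDelta (L : ℕ) (ρ δ : ℕ → ℝ) : Prop :=
  0 ≤ δ 1 ∧ (∀ ℓ, 1 ≤ ℓ → ℓ ≤ L → δ ℓ ≤ δ (ℓ + 1)) ∧ δ (L + 1) ≤ rbar L ρ

/-- Membership in `W = {w ∈ ℝ^{N+1} : 0 ≤ w ℓ ≤ 1 for all ℓ, w (L+1) = 1}`. -/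
def memW (N L : ℕ) (w : ℕ → ℝ) : Prop :=
  (∀ ℓ, 1 ≤ ℓ → ℓ ≤ N + 1 → 0 ≤ w ℓ ∧ w ℓ ≤ 1) ∧ w (L + 1) = 1

/-- The objective `J(w, δ)`. -/
noncomputable def Jfun (L : ℕ) (ρ w δ : ℕ → ℝ) : ℝ :=
  δ (L + 1) + ∑ ℓ ∈ Finset.Icc 1 L, (max 0 (ρ ℓ - δ ℓ) - (δ (ℓ + 1) - δ ℓ)) * w ℓ

/-- `δ'` dominates `δ` (both thought of as elements of `Δ`). -/
def dominatesDelta (N L : ℕ) (ρ δ' δ : ℕ → ℝ) : Prop :=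
  (∀ w, memW N L w → Jfun L ρ w δ' ≤ Jfun L ρ w δ) ∧
  ∃ w, memW N L w ∧ Jfun L ρ w δ' < Jfun L ρ w δ

/-- `δ` is a Pareto cut in `Δ`. -/
def paretoDelta (N L : ℕ) (ρ δ : ℕ → ℝ) : Prop :=
  ¬ ∃ δ', memDelta L ρ δ' ∧ dominatesDelta N L ρ δ' δ

/-- `T(δ) = max {ℓ ∈ {1,…,L+1} : δ ℓ ≤ ρ ℓ}`. -/
noncomputable def Tof (L : ℕ) (ρ δ : ℕ → ℝ) : ℕ :=
  sSup {ℓ : ℕ | 1 ≤ ℓ ∧ ℓ ≤ L + 1 ∧ δ ℓ ≤ ρ ℓ}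

/-- Property (P1). -/
def P1 (L : ℕ) (ρ δ : ℕ → ℝ) : Prop := 1 < Tof L ρ δ

/-- Property (P2). -/
def P2 (ρ δ : ℕ → ℝ) : Prop := δ 1 ≤ ρ 1

/-- Property (P3). -/
def P3 (L : ℕ) (ρ δ : ℕ → ℝ) : Prop :=
  ∀ ℓ, 2 ≤ ℓ → ℓ ≤ L → δ ℓ < ρ ℓ → δ ℓ = δ (ℓ + 1)

/-- Property (P4). -/
def P4 (L : ℕ) (ρ δ : ℕ → ℝ) : Prop :=
  ∀ ℓ, Tof L ρ δ ≤ ℓ → ℓ ≤ L + 1 → δ ℓ = δ (Tof L ρ δ)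


/-!
Writing the coefficient of `w ℓ` in `J(w, δ)` as `max (δ ℓ) (ρ ℓ) - δ (ℓ + 1)`, the objective depends
on `δ ℓ` only through `max (δ ℓ) (ρ ℓ)` and `-δ (ℓ + 1)`. The backward recursion never moves an entry
`δ ℓ ≥ ρ ℓ` and raises an entry `δ ℓ < ρ ℓ` to at most `ρ ℓ`, so every `max (δ ℓ) (ρ ℓ)` is unchanged,
while, by downward induction, `δ ≤ δ'`. Hence every coefficient weakly decreases, and the coefficient
in front of `w (ℓ - 1)` strictly decreases wherever `δ' ℓ ≠ δ ℓ`. An entry with `δ ℓ ≤ ρ ℓ` keeps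
`δ' ℓ ≤ ρ ℓ`, so `T(δ) ≤ T(δ')` and (P1) persists.
-/

lemma max_zero_sub_sub_sub (a b c : ℝ) : max 0 (a - b) - (c - b) = max b a - c := by
  rcases le_total a b with h | h
  · rw [max_eq_left (by linarith), max_eq_left h]; ring
  · rw [max_eq_right (by linarith), max_eq_right h]; ring

lemma Jfun_eq (L : ℕ) (ρ w δ : ℕ → ℝ) :
    Jfun L ρ w δ = δ (L + 1) + ∑ ℓ ∈ Icc 1 L, (max (δ ℓ) (ρ ℓ) - δ (ℓ + 1)) * w ℓ := by
  simp only [Jfun, max_zero_sub_sub_sub]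

lemma Tof_spec_of_P1 {L : ℕ} {ρ δ : ℕ → ℝ} (h : P1 L ρ δ) :
    Tof L ρ δ ≤ L + 1 ∧ δ (Tof L ρ δ) ≤ ρ (Tof L ρ δ) := by
  have hne : {ℓ : ℕ | 1 ≤ ℓ ∧ ℓ ≤ L + 1 ∧ δ ℓ ≤ ρ ℓ}.Nonempty := by
    by_contra hempty
    rw [Set.not_nonempty_iff_eq_empty] at hempty
    rw [P1, Tof, hempty, csSup_empty] at h
    exact absurd h (by decide)
  exact (Nat.sSup_mem hne ⟨L + 1, fun _ hx => hx.2.1⟩).2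

lemma le_Tof {L : ℕ} {ρ δ : ℕ → ℝ} {ℓ : ℕ} (h1 : 1 ≤ ℓ) (hL : ℓ ≤ L + 1) (hδρ : δ ℓ ≤ ρ ℓ) :
    ℓ ≤ Tof L ρ δ :=
  le_csSup ⟨L + 1, fun _ hx => hx.2.1⟩ ⟨h1, hL, hδρ⟩

lemma dominatesDelta_of_le {N L : ℕ} (hLN : L ≤ N + 1) {ρ δ δ' : ℕ → ℝ} (htop : δ' (L + 1) = δ (L + 1))
    (hmax : ∀ ℓ, 1 ≤ ℓ → ℓ ≤ L → max (δ' ℓ) (ρ ℓ) = max (δ ℓ) (ρ ℓ))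
    (hle : ∀ ℓ, 2 ≤ ℓ → ℓ ≤ L + 1 → δ ℓ ≤ δ' ℓ)
    (hlt : ∃ ℓ, 2 ≤ ℓ ∧ ℓ ≤ L ∧ δ ℓ < δ' ℓ) :
    dominatesDelta N L ρ δ' δ := by
  have hcoef : ∀ ℓ ∈ Icc 1 L,
      max (δ' ℓ) (ρ ℓ) - δ' (ℓ + 1) ≤ max (δ ℓ) (ρ ℓ) - δ (ℓ + 1) := by
    intro ℓ hℓ
    rw [mem_Icc] at hℓ
    rw [hmax ℓ hℓ.1 hℓ.2]
    linarith [hle (ℓ + 1) (by omega) (by omega)]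
  refine ⟨fun w ⟨hw, _⟩ => ?_, fun _ => 1, ⟨fun _ _ _ => ⟨zero_le_one, le_rfl⟩, rfl⟩, ?_⟩
  · rw [Jfun_eq, Jfun_eq, htop]
    refine add_le_add_right (sum_le_sum fun ℓ hℓ => ?_) _
    have hℓL := (mem_Icc.1 hℓ).2
    exact mul_le_mul_of_nonneg_right (hcoef ℓ hℓ) (hw ℓ (mem_Icc.1 hℓ).1 (by omega)).1
  · obtain ⟨ℓ₀, h2, hL, hδℓ₀⟩ := hlt
    rw [Jfun_eq, Jfun_eq, htop]
    simp only [mul_one]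
    refine add_lt_add_right (sum_lt_sum hcoef ⟨ℓ₀ - 1, mem_Icc.2 ⟨by omega, by omega⟩, ?_⟩) _
    rw [hmax _ (by omega) (by omega), Nat.sub_add_cancel (by omega)]
    linarith

structure IsBackwardLift (L : ℕ) (ρ δ δ' : ℕ → ℝ) : Prop where
  top : δ' (L + 1) = δ (L + 1)
  eq_of_le : ∀ ℓ, 2 ≤ ℓ → ℓ ≤ L → ρ ℓ ≤ δ ℓ → δ' ℓ = δ ℓ
  eq_min_of_lt : ∀ ℓ, 2 ≤ ℓ → ℓ ≤ L → δ ℓ < ρ ℓ → δ' ℓ = min (ρ ℓ) (δ' (ℓ + 1))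
  bot : δ' 1 = δ 1

namespace IsBackwardLift

variable {L : ℕ} {ρ δ δ' : ℕ → ℝ}

lemma le_apply (h : IsBackwardLift L ρ δ δ')
    (hmono : ∀ ℓ, 1 ≤ ℓ → ℓ ≤ L → δ ℓ ≤ δ (ℓ + 1)) {ℓ : ℕ} (h2 : 2 ≤ ℓ) (hL : ℓ ≤ L + 1) :
    δ ℓ ≤ δ' ℓ := by
  refine Nat.decreasingInduction' (P := fun k => δ k ≤ δ' k) (fun k hk hℓk ih => ?_) hL h.top.ge
  rcases le_or_gt (ρ k) (δ k) with hρδ | hδρ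
  · exact (h.eq_of_le k (by omega) (by omega) hρδ).ge
  · rw [h.eq_min_of_lt k (by omega) (by omega) hδρ]
    exact le_min hδρ.le ((hmono k (by omega) (by omega)).trans ih)

lemma max_apply (h : IsBackwardLift L ρ δ δ') {ℓ : ℕ} (h1 : 1 ≤ ℓ) (hL : ℓ ≤ L) :
    max (δ' ℓ) (ρ ℓ) = max (δ ℓ) (ρ ℓ) := by
  obtain rfl | h2 := eq_or_lt_of_le h1
  · rw [h.bot]
  rcases le_or_gt (ρ ℓ) (δ ℓ) with hρδ | hδρ
  · rw [h.eq_of_le ℓ h2 hL hρδ]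
  · rw [h.eq_min_of_lt ℓ h2 hL hδρ, max_eq_right (min_le_left _ _), max_eq_right hδρ.le]

lemma apply_le_of_le (h : IsBackwardLift L ρ δ δ') {ℓ : ℕ} (h2 : 2 ≤ ℓ) (hL : ℓ ≤ L + 1)
    (hδρ : δ ℓ ≤ ρ ℓ) : δ' ℓ ≤ ρ ℓ := by
  obtain rfl | hL := eq_or_lt_of_le hL
  · rwa [h.top]
  rcases le_or_gt (ρ ℓ) (δ ℓ) with hρδ | hδρ'
  · rwa [h.eq_of_le ℓ h2 (by omega) hρδ]
  · rw [h.eq_min_of_lt ℓ h2 (by omega) hδρ']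
    exact min_le_left _ _

lemma memDelta (h : IsBackwardLift L ρ δ δ') (hδ : memDelta L ρ δ) : memDelta L ρ δ' := by
  obtain ⟨hδ0, hmono, hδtop⟩ := hδ
  refine ⟨h.bot ▸ hδ0, fun ℓ h1 hL => ?_, h.top ▸ hδtop⟩
  obtain rfl | h2 := eq_or_lt_of_le h1
  · rw [h.bot]
    exact (hmono 1 le_rfl hL).trans (h.le_apply hmono le_rfl (by omega))
  rcases le_or_gt (ρ ℓ) (δ ℓ) with hρδ | hδρ
  · rw [h.eq_of_le ℓ h2 hL hρδ]
    exact (hmono ℓ h1 hL).trans (h.le_apply hmono (by omega) (by omega))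
  · rw [h.eq_min_of_lt ℓ h2 hL hδρ]
    exact min_le_right _ _

lemma P1 (h : IsBackwardLift L ρ δ δ') (hP1 : P1 L ρ δ) : _root_.P1 L ρ δ' := by
  obtain ⟨hTL, hTρ⟩ := Tof_spec_of_P1 hP1
  exact lt_of_lt_of_le hP1 (le_Tof hP1.le hTL (h.apply_le_of_le hP1 hTL hTρ))

lemma P2 (h : IsBackwardLift L ρ δ δ') (hP2 : P2 ρ δ) : _root_.P2 ρ δ' := by
  rwa [_root_.P2, h.bot]

lemma P3 (h : IsBackwardLift L ρ δ δ') : _root_.P3 L ρ δ' := by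
  intro ℓ h2 hL hlt
  rcases le_or_gt (ρ ℓ) (δ ℓ) with hρδ | hδρ
  · rw [h.eq_of_le ℓ h2 hL hρδ] at hlt
    linarith
  · rw [h.eq_min_of_lt ℓ h2 hL hδρ] at hlt ⊢
    exact min_eq_right ((min_lt_iff.1 hlt).resolve_left (lt_irrefl _)).le

lemma dominatesDelta {N : ℕ} (hLN : L ≤ N + 1) (h : IsBackwardLift L ρ δ δ')
    (hmono : ∀ ℓ, 1 ≤ ℓ → ℓ ≤ L → δ ℓ ≤ δ (ℓ + 1)) (hne : ∃ ℓ, 1 ≤ ℓ ∧ ℓ ≤ L + 1 ∧ δ' ℓ ≠ δ ℓ) :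
    dominatesDelta N L ρ δ' δ := by
  refine dominatesDelta_of_le hLN h.top (fun ℓ => h.max_apply) (fun ℓ => h.le_apply hmono) ?_
  obtain ⟨ℓ, h1, hL, hδ'ℓ⟩ := hne
  have h2 : 2 ≤ ℓ := by
    by_contra! hℓ
    exact hδ'ℓ (by rw [show ℓ = 1 by omega, h.bot])
  have hL' : ℓ ≤ L := by
    by_contra! hℓ
    exact hδ'ℓ (by rw [show ℓ = L + 1 by omega, h.top])
  exact ⟨ℓ, h2, hL', lt_of_le_of_ne (h.le_apply hmono h2 hL) (Ne.symm hδ'ℓ)⟩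

end IsBackwardLift

theorem stmt18_general
    (N L : ℕ) (hLN : L ≤ N)
    (ρ : ℕ → ℝ)
    (δ : ℕ → ℝ) (hδ : memDelta L ρ δ) (hP1 : P1 L ρ δ) (hP2 : P2 ρ δ)
    (δ' : ℕ → ℝ)
    (htop : δ' (L + 1) = δ (L + 1))
    (hrec1 : ∀ ℓ, 2 ≤ ℓ → ℓ ≤ L → ρ ℓ ≤ δ ℓ → δ' ℓ = δ ℓ)
    (hrec2 : ∀ ℓ, 2 ≤ ℓ → ℓ ≤ L → δ ℓ < ρ ℓ → δ' ℓ = min (ρ ℓ) (δ' (ℓ + 1)))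
    (hbot : δ' 1 = δ 1) :
    memDelta L ρ δ' ∧ P1 L ρ δ' ∧ P2 ρ δ' ∧ P3 L ρ δ' ∧
      ((∃ ℓ, 1 ≤ ℓ ∧ ℓ ≤ L + 1 ∧ δ' ℓ ≠ δ ℓ) → dominatesDelta N L ρ δ' δ) := by
  have h : IsBackwardLift L ρ δ δ' := ⟨htop, hrec1, hrec2, hbot⟩
  exact ⟨h.memDelta hδ, h.P1 hP1, h.P2 hP2, h.P3, h.dominatesDelta (by omega) hδ.2.1⟩

theorem stmt18
    (N L : ℕ) (hL1 : 1 ≤ L) (hLN : L ≤ N)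
    (ρ : ℕ → ℝ)
    (hρpos : ∀ ℓ, 1 ≤ ℓ → ℓ ≤ N + 1 → ℓ ≠ L + 1 → 0 < ρ ℓ)
    (hρ0 : ρ (L + 1) = 0)
    (δ : ℕ → ℝ) (hδ : memDelta L ρ δ) (hP1 : P1 L ρ δ) (hP2 : P2 ρ δ)
    (δ' : ℕ → ℝ)
    (htop : δ' (L + 1) = δ (L + 1))
    (hrec1 : ∀ ℓ, 2 ≤ ℓ → ℓ ≤ L → ρ ℓ ≤ δ ℓ → δ' ℓ = δ ℓ)
    (hrec2 : ∀ ℓ, 2 ≤ ℓ → ℓ ≤ L → δ ℓ < ρ ℓ → δ' ℓ = min (ρ ℓ) (δ' (ℓ + 1)))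
    (hbot : δ' 1 = δ 1) :
    memDelta L ρ δ' ∧ P1 L ρ δ' ∧ P2 ρ δ' ∧ P3 L ρ δ' ∧
      ((∃ ℓ, 1 ≤ ℓ ∧ ℓ ≤ L + 1 ∧ δ' ℓ ≠ δ ℓ) → dominatesDelta N L ρ δ' δ) :=
  stmt18_general N L hLN ρ δ hδ hP1 hP2 δ' htop hrec1 hrec2 hbot
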